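/- arXiv:2602.05209 — 3 statements merged into one kernel-verified Lean document; each statement's English description precedes it below -/
import Mathlib

section
/- Let γ > 0, η > 0, d > 0 with ηd² ≤ γ, and θ ∈ [0, π/2] satisfying γ cos²θ < ηd². Then (√(ηd²) cosθ + √(γ − ηd²) sinθ)² ≥ γ − ηd². -/
open Real

/-- Key inequality in the proof of Lemma 2. -/
theorem stmt_1 (γ η d θ : ℝ) (hγ : 0 < γ) (hη : 0 < η) (hd : 0 < d)
    (hle : η * d ^ 2 ≤ γ) (hθ : θ ∈ Set.Icc 0 (π / 2))
    (hcos : γ * Real.cos θ ^ 2 < η * d ^ 2) :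
    (Real.sqrt (η * d ^ 2) * Real.cos θ + Real.sqrt (γ - η * d ^ 2) * Real.sin θ) ^ 2
      ≥ γ - η * d ^ 2 := by
  obtain ⟨h0, h1⟩ := hθ
  have hc : 0 ≤ Real.cos θ := Real.cos_nonneg_of_mem_Icc
    ⟨by linarith [Real.pi_pos], h1⟩
  have hs : 0 ≤ Real.sin θ := Real.sin_nonneg_of_nonneg_of_le_pi h0
    (by linarith [Real.pi_pos])
  have ha : (0:ℝ) ≤ η * d ^ 2 := by positivity
  have hb : (0:ℝ) ≤ γ - η * d ^ 2 := by linarith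
  have pyth := Real.sin_sq_add_cos_sq θ
  have hsa : Real.sqrt (η * d ^ 2) ^ 2 = η * d ^ 2 := Real.sq_sqrt ha
  have hsb : Real.sqrt (γ - η * d ^ 2) ^ 2 = γ - η * d ^ 2 := Real.sq_sqrt hb
  have hna : 0 ≤ Real.sqrt (η * d ^ 2) := Real.sqrt_nonneg _
  have hnb : 0 ≤ Real.sqrt (γ - η * d ^ 2) := Real.sqrt_nonneg _
  -- key: √b cosθ ≤ √a sinθ
  have hkeysq : (γ - η * d ^ 2) * Real.cos θ ^ 2 ≤ (η * d ^ 2) * Real.sin θ ^ 2 := by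
    nlinarith
  have hkey : Real.sqrt (γ - η * d ^ 2) * Real.cos θ
      ≤ Real.sqrt (η * d ^ 2) * Real.sin θ := by
    nlinarith [mul_nonneg hnb hc, mul_nonneg hna hs,
      sq_nonneg (Real.sqrt (γ - η * d ^ 2) * Real.cos θ - Real.sqrt (η * d ^ 2) * Real.sin θ),
      sq_nonneg (Real.sqrt (γ - η * d ^ 2) * Real.cos θ + Real.sqrt (η * d ^ 2) * Real.sin θ)]
  nlinarith [mul_le_mul_of_nonneg_left hkey (mul_nonneg hnb hc),
    mul_nonneg (mul_nonneg hna hc) (mul_nonneg hna hc)]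
end

section
/- Let Γ*(θ) = γ if γ cos²θ ≥ ηd², and Γ*(θ) = (√(ηd²) cosθ + √(γ−ηd²) sinθ)² otherwise, for θ ∈ [0, π/2], with 0 < ηd² ≤ γ. Then Γ*(θ) ≥ γ − ηd² for all θ, with equality possible as θ → π/2. -/
open Real

/-- Lemma 2: lower bound Γ*(θ) ≥ γ − ηd² on the optimal beamforming gain,
together with tightness at θ = π/2. -/
theorem stmt_3 (γ η d : ℝ) (hpos : 0 < η * d ^ 2) (hle : η * d ^ 2 ≤ γ)
    (Γ : ℝ → ℝ)
    (hΓ : ∀ θ, Γ θ =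
      if γ * Real.cos θ ^ 2 ≥ η * d ^ 2 then γ
      else (Real.sqrt (η * d ^ 2) * Real.cos θ
            + Real.sqrt (γ - η * d ^ 2) * Real.sin θ) ^ 2) :
    (∀ θ ∈ Set.Icc 0 (π / 2), Γ θ ≥ γ - η * d ^ 2) ∧ Γ (π / 2) = γ - η * d ^ 2 := by
  have hb : 0 ≤ γ - η * d ^ 2 := by linarith
  have hsa : Real.sqrt (η * d ^ 2) ^ 2 = η * d ^ 2 := Real.sq_sqrt hpos.le
  have hsb : Real.sqrt (γ - η * d ^ 2) ^ 2 = γ - η * d ^ 2 := Real.sq_sqrt hb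
  constructor
  · rintro θ ⟨h0, h1⟩
    rw [hΓ]
    split_ifs with h
    · linarith
    · push_neg at h
      have hpi := Real.pi_pos
      have hc : 0 ≤ Real.cos θ :=
        Real.cos_nonneg_of_mem_Icc ⟨by linarith, h1⟩
      have hs : 0 ≤ Real.sin θ :=
        Real.sin_nonneg_of_nonneg_of_le_pi h0 (by linarith)
      have hpyth : Real.sin θ ^ 2 + Real.cos θ ^ 2 = 1 := Real.sin_sq_add_cos_sq θ
      -- key: b c² ≤ a s²
      have hkey : (γ - η * d ^ 2) * Real.cos θ ^ 2 ≤ η * d ^ 2 * Real.sin θ ^ 2 := by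
        nlinarith [sq_nonneg (Real.cos θ)]
      have hkey2 : Real.sqrt (γ - η * d ^ 2) * Real.cos θ ≤
          Real.sqrt (η * d ^ 2) * Real.sin θ := by
        nlinarith [Real.sqrt_nonneg (γ - η * d ^ 2), Real.sqrt_nonneg (η * d ^ 2),
          mul_nonneg (Real.sqrt_nonneg (γ - η * d ^ 2)) hc,
          mul_nonneg (Real.sqrt_nonneg (η * d ^ 2)) hs]
      nlinarith [mul_nonneg (Real.sqrt_nonneg (γ - η * d ^ 2)) hc,
        mul_nonneg (Real.sqrt_nonneg (η * d ^ 2)) hc,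
        mul_nonneg (mul_nonneg (Real.sqrt_nonneg (η * d ^ 2)) hc)
          (mul_nonneg (Real.sqrt_nonneg (γ - η * d ^ 2)) hs),
        sq_nonneg (Real.sqrt (η * d ^ 2) * Real.cos θ)]
  · rw [hΓ]
    rw [Real.cos_pi_div_two, Real.sin_pi_div_two]
    rw [if_neg (by push_neg; simpa using hpos)]
    simp only [mul_zero, mul_one, zero_add]
    exact hsb
end

section
/- Let a, b ∈ ℂ^M be unit vectors with |a^H b| = cosθ, θ ∈ (0, π/2). Among all w ∈ ℂ^M with ‖w‖² ≤ P and |a^H w|² ≥ g (where 0 < g ≤ P cos²θ is violated, i.e., P cos²θ < g ≤ P), the maximum of |b^H w|² equals (√g cosθ + √(P − g) sinθ)². -/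
/-!
Split `b = α a + b'` with `α = ⟪a, b⟫` and `b' ⊥ a`, so that `|α| = cos θ` and `‖b'‖ = sin θ`.
For feasible `w` with `x = |aᴴw|`, the triangle and Cauchy–Schwarz inequalities give `|bᴴw| ≤ x cos θ + sin θ √(P - x²)`, a function
of `x` that decreases beyond `x = √P cos θ`; since `g > P cos² θ`, it is largest at `x = √g`, where
`w = √g (α / |α|) a + √(P - g) b' / ‖b'‖` attains it.
-/

open scoped InnerProductSpace ComplexInnerProductSpace
open Real

lemma mul_add_mul_le_of_sq_add_sq_eq {c s u v x t : ℝ} (hc : 0 ≤ c) (hs : 0 ≤ s)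
    (hu : 0 ≤ u) (hv : 0 ≤ v) (h : u ^ 2 + v ^ 2 = x ^ 2 + t ^ 2)
    (hux : u ≤ x) (hcv : c * v ≤ s * u) :
    c * x + s * t ≤ c * u + s * v := by
  have htv : t ≤ v := by nlinarith
  have hct : c * t ≤ s * x := by
    nlinarith [mul_le_mul_of_nonneg_left htv hc, mul_le_mul_of_nonneg_left hux hs]
  -- `(x - u)(x + u) = (v - t)(v + t)` and `c (v + t) ≤ s (x + u)`
  have key : c * (x - u) * (x + u) ≤ s * (v - t) * (x + u) := by
    nlinarith [mul_nonneg (sub_nonneg.2 htv) (add_nonneg (sub_nonneg.2 hcv) (sub_nonneg.2 hct))]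
  rcases (add_nonneg (hu.trans hux) hu).eq_or_lt with h0 | h0
  · nlinarith
  · nlinarith [le_of_mul_le_mul_right key h0]

lemma mul_add_mul_sqrt_sub_sq_le {c s P g x : ℝ} (hc : 0 ≤ c) (hs : 0 ≤ s)
    (hcs : c ^ 2 + s ^ 2 = 1) (hPg : P * c ^ 2 ≤ g) (hgP : g ≤ P) (hx : 0 ≤ x)
    (hgx : g ≤ x ^ 2) (hxP : x ^ 2 ≤ P) :
    c * x + s * √(P - x ^ 2) ≤ c * √g + s * √(P - g) := by
  have hg : 0 ≤ g := by nlinarith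
  have hu := sq_sqrt hg
  have hv := sq_sqrt (sub_nonneg.2 hgP)
  refine mul_add_mul_le_of_sq_add_sq_eq hc hs (sqrt_nonneg _) (sqrt_nonneg _) ?_
    ((sqrt_le_sqrt hgx).trans_eq (sqrt_sq hx)) ?_
  · rw [hu, hv, sq_sqrt (sub_nonneg.2 hxP)]
    ring
  · nlinarith [mul_nonneg hc (sqrt_nonneg (P - g)), mul_nonneg hs (sqrt_nonneg g)]

section

variable {𝕜 E : Type*} [RCLike 𝕜] [NormedAddCommGroup E] [InnerProductSpace 𝕜 E]
  {a : E} (ha : ‖a‖ = 1)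
include ha

lemma inner_sub_inner_smul_eq_zero (v : E) : ⟪a, v - ⟪a, v⟫_𝕜 • a⟫_𝕜 = 0 := by
  rw [inner_sub_right, inner_smul_right, inner_self_eq_one_of_norm_eq_one ha, mul_one, sub_self]

lemma norm_sub_inner_smul_sq (v : E) :
    ‖v - ⟪a, v⟫_𝕜 • a‖ ^ 2 = ‖v‖ ^ 2 - ‖⟪a, v⟫_𝕜‖ ^ 2 := by
  have horth : ⟪⟪a, v⟫_𝕜 • a, v - ⟪a, v⟫_𝕜 • a⟫_𝕜 = 0 := by
    rw [inner_smul_left, inner_sub_inner_smul_eq_zero ha, mul_zero]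
  have := norm_add_sq_eq_norm_sq_add_norm_sq_of_inner_eq_zero _ _ horth
  rw [add_sub_cancel, norm_smul, ha, mul_one] at this
  linarith

lemma inner_eq_conj_mul_add_inner_sub (v w : E) :
    ⟪v, w⟫_𝕜 = starRingEnd 𝕜 ⟪a, v⟫_𝕜 * ⟪a, w⟫_𝕜 + ⟪v - ⟪a, v⟫_𝕜 • a, w - ⟪a, w⟫_𝕜 • a⟫_𝕜 := by
  have hv : ⟪v - ⟪a, v⟫_𝕜 • a, a⟫_𝕜 = 0 := by
    rw [← inner_conj_symm, inner_sub_inner_smul_eq_zero ha, map_zero]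
  rw [inner_sub_right, inner_smul_right, hv, mul_zero, sub_zero, inner_sub_left, inner_smul_left]
  ring

lemma norm_inner_le_norm_inner_mul_add (v w : E) :
    ‖⟪v, w⟫_𝕜‖ ≤ ‖⟪a, v⟫_𝕜‖ * ‖⟪a, w⟫_𝕜‖ + ‖v - ⟪a, v⟫_𝕜 • a‖ * ‖w - ⟪a, w⟫_𝕜 • a‖ := by
  rw [inner_eq_conj_mul_add_inner_sub ha]
  calc _ ≤ _ := norm_add_le _ _
    _ ≤ _ := by
      rw [norm_mul, RCLike.norm_conj]
      gcongr
      exact norm_inner_le_norm _ _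

lemma exists_norm_sq_eq_inner_eq {b : E} (hab : ⟪a, b⟫_𝕜 ≠ 0) (hb : b - ⟪a, b⟫_𝕜 • a ≠ 0)
    (u v : ℝ) : ∃ w : E, ‖w‖ ^ 2 = u ^ 2 + v ^ 2 ∧ ‖⟪a, w⟫_𝕜‖ = |u| ∧
      ⟪b, w⟫_𝕜 = ((‖⟪a, b⟫_𝕜‖ * u + ‖b - ⟪a, b⟫_𝕜 • a‖ * v : ℝ) : 𝕜) := by
  set α := ⟪a, b⟫_𝕜
  set c := b - α • a
  have hα : ‖α‖ ≠ 0 := norm_ne_zero_iff.2 hab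
  have hc : ‖c‖ ≠ 0 := norm_ne_zero_iff.2 hb
  have hac : ⟪a, c⟫_𝕜 = 0 := inner_sub_inner_smul_eq_zero ha b
  have hca : ⟪c, a⟫_𝕜 = 0 := by rw [← inner_conj_symm, hac, map_zero]
  set β : 𝕜 := ((u / ‖α‖ : ℝ) : 𝕜) * α
  set γ : 𝕜 := ((v / ‖c‖ : ℝ) : 𝕜)
  have hβ : ‖β‖ = |u| := by
    rw [norm_mul, RCLike.norm_ofReal, abs_div, abs_norm, div_mul_cancel₀ _ hα]
  refine ⟨β • a + γ • c, ?_, ?_, ?_⟩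
  · rw [@norm_add_sq 𝕜, inner_smul_left, inner_smul_right, hac, mul_zero, mul_zero,
      map_zero, mul_zero, add_zero, norm_smul, norm_smul, ha, hβ, RCLike.norm_ofReal, abs_div,
      abs_norm]
    field_simp
    rw [sq_abs, sq_abs]
  · rw [inner_add_right, inner_smul_right, inner_smul_right, hac,
      inner_self_eq_one_of_norm_eq_one ha, mul_one, mul_zero, add_zero, hβ]
  · have hb : b = α • a + c := (add_sub_cancel _ _).symm
    rw [hb, inner_add_left, inner_smul_left, inner_add_right, inner_add_right, inner_smul_right,
      inner_smul_right, inner_smul_right, inner_smul_right, hac, hca,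
      inner_self_eq_one_of_norm_eq_one ha, inner_self_eq_norm_sq_to_K]
    simp only [β, γ, mul_one, mul_zero, add_zero, zero_add]
    rw [mul_left_comm, RCLike.conj_mul]
    push_cast
    field_simp

end

/-- Optimal value (45) of the non-convex beamforming subproblem in the regime
where the communication constraint is active. -/
theorem stmt_7 {M : ℕ} (a b : EuclideanSpace ℂ (Fin M))
    (ha : ‖a‖ = 1) (hb : ‖b‖ = 1) (θ P g : ℝ)
    (hθ : θ ∈ Set.Ioo 0 (π / 2)) (hab : ‖⟪a, b⟫‖ = Real.cos θ)
    (hg₁ : P * Real.cos θ ^ 2 < g) (hg₂ : g ≤ P) :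
    IsGreatest
      {t : ℝ | ∃ w : EuclideanSpace ℂ (Fin M),
        ‖w‖ ^ 2 ≤ P ∧ ‖⟪a, w⟫‖ ^ 2 ≥ g ∧ t = ‖⟪b, w⟫‖ ^ 2}
      ((Real.sqrt g * Real.cos θ + Real.sqrt (P - g) * Real.sin θ) ^ 2) := by
  obtain ⟨hθ₀, hθ₁⟩ := hθ
  have hcos : 0 < cos θ := cos_pos_of_mem_Ioo ⟨by linarith [pi_pos], hθ₁⟩
  have hsin : 0 < sin θ := sin_pos_of_pos_of_lt_pi hθ₀ (by linarith)
  have hg : 0 ≤ g := by nlinarith [cos_sq_le_one θ]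
  have hres : ‖b - ⟪a, b⟫ • a‖ = sin θ := by
    rw [← sqrt_sq (norm_nonneg _), norm_sub_inner_smul_sq ha, hb, hab, one_pow, ← sin_sq,
      sqrt_sq hsin.le]
  constructor
  · obtain ⟨w, hw, haw, hbw⟩ := exists_norm_sq_eq_inner_eq ha
      (norm_ne_zero_iff.1 (hab ▸ hcos.ne')) (norm_ne_zero_iff.1 (hres ▸ hsin.ne')) √g √(P - g)
    refine ⟨w, ?_, ?_, ?_⟩
    · rw [hw, sq_sqrt hg, sq_sqrt (sub_nonneg.2 hg₂)]
      linarith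
    · rw [haw, abs_of_nonneg (sqrt_nonneg g), sq_sqrt hg]
    · rw [hbw, hab, hres, RCLike.norm_ofReal, abs_of_nonneg (by positivity)]
      ring
  · rintro _ ⟨w, hwP, hwg, rfl⟩
    have hx : ‖⟪a, w⟫‖ ^ 2 ≤ P := by
      nlinarith [norm_sub_inner_smul_sq (𝕜 := ℂ) ha w, sq_nonneg ‖w - ⟪a, w⟫ • a‖]
    have hresw : ‖w - ⟪a, w⟫ • a‖ ≤ √(P - ‖⟪a, w⟫‖ ^ 2) := by
      rw [← sqrt_sq (norm_nonneg _), norm_sub_inner_smul_sq ha]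
      exact sqrt_le_sqrt (by linarith)
    refine pow_le_pow_left₀ (norm_nonneg _) ?_ 2
    calc ‖⟪b, w⟫‖ ≤ cos θ * ‖⟪a, w⟫‖ + sin θ * ‖w - ⟪a, w⟫ • a‖ := by
          simpa only [hab, hres] using norm_inner_le_norm_inner_mul_add (𝕜 := ℂ) ha b w
      _ ≤ cos θ * ‖⟪a, w⟫‖ + sin θ * √(P - ‖⟪a, w⟫‖ ^ 2) := by gcongr
      _ ≤ cos θ * √g + sin θ * √(P - g) :=
          mul_add_mul_sqrt_sub_sq_le hcos.le hsin.le (cos_sq_add_sin_sq θ) hg₁.le hg₂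
            (norm_nonneg _) hwg hx
      _ = _ := by ring
end
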